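/- arXiv:1902.07733 — 2 statements merged into one kernel-verified Lean document; each statement's English description precedes it below -/
import Mathlib

section
/- Let f : ℝⁿ → ℝⁿ be piecewise affine with pieces (f_i, C_i), i = 1,…,N, and suppose f is a bijection of ℝⁿ onto ℝⁿ. Then all the Jacobians J_i have the same sign: either J_i > 0 for every i, or J_i < 0 for every i. -/
/-- `Eu n` is the Euclidean space `ℝⁿ`. -/
noncomputable abbrev Eu (n : ℕ) := EuclideanSpace ℝ (Fin n)

/-- A closed convex polyhedron in `ℝⁿ`: a finite intersection of closed half-spaces. -/
def IsPolyhedron {n : ℕ} (C : Set (Eu n)) : Prop :=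
  ∃ (m : ℕ) (l : Fin m → (Eu n →ₗ[ℝ] ℝ)) (c : Fin m → ℝ),
    C = {x | ∀ i, l i x ≤ c i}

/-- `f : ℝⁿ → ℝⁿ` is piecewise affine with pieces `(F i, C i)`, `i : Fin N`:
each `F i` is an affine map, each `C i` is a closed convex polyhedron with nonempty
interior, the `C i` cover `ℝⁿ`, their interiors are pairwise disjoint, and `f`
agrees with `F i` on `C i`. -/
def IsPiecewiseAffine {n N : ℕ} (f : Eu n → Eu n)
    (F : Fin N → (Eu n →ᵃ[ℝ] Eu n)) (C : Fin N → Set (Eu n)) : Prop :=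
  (∀ i, IsPolyhedron (C i)) ∧
  (∀ i, (interior (C i)).Nonempty) ∧
  (⋃ i, C i) = Set.univ ∧
  (∀ i j, i ≠ j → interior (C i) ∩ interior (C j) = ∅) ∧
  (∀ i, ∀ x ∈ C i, f x = F i x)

/-!
A piece with nonempty interior on which `f` is injective has an injective linear part, so every
Jacobian is nonzero. If two pieces `S`, `T` cover a neighbourhood of a common point, their affine
maps agree on the separating hyperplane `φ = c`, so `Q.linear = P.linear ∘ L` with `L` the
identity on `ker φ`, and `det L = φ u` where `P.linear u = Q.linear v`, `φ v = 1`. If `φ u ≤ 0`,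
then for small `t > 0` the points `x + t u ∈ S` and `x + t v ∈ T` have the same image; so
injectivity forces `φ u > 0`, that is, `det P * det Q > 0`.

To pass from `C i` to `C j`, join `p ∈ interior (C i)` to a point `q ∈ C j` whose segment avoids
every point lying in three pieces. Such `q` exist because the bad ones form a null set: a triple
point lies on two independent separating hyperplanes (three pieces cannot share a point if all
their separating functionals are proportional), and the points `q` whose segment from `p` meets
`{φ = c} ∩ {ψ = d}` lie on a single hyperplane. Along the segment the pieces with Jacobians of
the sign of `det (F i)` and those of the opposite sign form two closed sets; by connectedness
they meet, at a point of exactly two pieces, contradicting the previous paragraph.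
-/

open Set Filter Topology MeasureTheory

theorem IsPolyhedron.isClosed {n : ℕ} {C : Set (Eu n)} (h : IsPolyhedron C) : IsClosed C := by
  obtain ⟨m, l, c, rfl⟩ := h
  rw [ofPred_forall]
  exact isClosed_iInter fun i =>
    isClosed_Iic.preimage (LinearMap.continuous_of_finiteDimensional (l i))

theorem IsPolyhedron.convex {n : ℕ} {C : Set (Eu n)} (h : IsPolyhedron C) : Convex ℝ C := by
  obtain ⟨m, l, c, rfl⟩ := h
  rw [ofPred_forall]
  exact convex_iInter fun i => convex_halfSpace_le (l i).isLinear _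

theorem eventually_forall_mem_imp_mem {ι X : Type*} [TopologicalSpace X] [Finite ι]
    {S : ι → Set X} (hS : ∀ i, IsClosed (S i)) (x : X) :
    ∀ᶠ y in 𝓝 x, ∀ i, y ∈ S i → x ∈ S i := by
  refine eventually_all.2 fun i => ?_
  by_cases hx : x ∈ S i
  · exact Eventually.of_forall fun _ _ => hx
  · filter_upwards [(hS i).isOpen_compl.mem_nhds hx] with y hy h using absurd h hy

theorem LinearMap.det_eq_det_mul_of_eqOn_ker {R M : Type*} [CommRing R] [AddCommGroup M]
    [Module R M] [Module.Free R M] [Module.Finite R M] {A B : M →ₗ[R] M}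
    {φ : Module.Dual R M} {u v : M} (hAB : ∀ y, φ y = 0 → A y = B y) (hv : φ v = 1)
    (hu : A u = B v) : LinearMap.det B = LinearMap.det A * φ u := by
  have hB : B = A ∘ₗ transvection φ (u - v) := by
    ext y
    have hy := hAB (y - φ y • v) (by simp [hv])
    simp only [map_sub, map_smul] at hy
    simp only [comp_apply, transvection.apply, map_add, map_smul, map_sub, hu]
    linear_combination (norm := module) -hy
  rw [hB, det_comp, transvection.det, map_sub, hv]
  ring

theorem LinearMap.det_ne_zero_of_injective {K V : Type*} [Field K] [AddCommGroup V] [Module K V]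
    [FiniteDimensional K V] {A : V →ₗ[K] V} (hA : Function.Injective A) : LinearMap.det A ≠ 0 :=
  ((isUnit_iff_isUnit_det A).1 ((Module.End.isUnit_iff A).2
    ⟨hA, injective_iff_surjective.1 hA⟩)).ne_zero

section Convex

variable {E : Type*} [NormedAddCommGroup E] [NormedSpace ℝ E]

theorem AffineMap.apply_add {F : Type*} [AddCommGroup F] [Module ℝ F] (P : E →ᵃ[ℝ] F) (x v : E) :
    P (x + v) = P x + P.linear v := by
  rw [add_comm x, add_comm (P x)]
  exact P.map_vadd x v

theorem eventually_nhdsGT_add_smul_mem {U : Set E} {x : E} (hU : U ∈ 𝓝 x) (v : E) :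
    ∀ᶠ t in 𝓝[>] (0 : ℝ), 0 < t ∧ x + t • v ∈ U := by
  have : Tendsto (fun t : ℝ => x + t • v) (𝓝 0) (𝓝 x) := by
    have hc : Continuous fun t : ℝ => x + t • v := by fun_prop
    simpa using hc.tendsto 0
  exact eventually_mem_nhdsWithin.and ((this.eventually_mem hU).filter_mono nhdsWithin_le_nhds)

theorem AffineMap.linear_injective_of_injOn {F : Type*} [AddCommGroup F] [Module ℝ F]
    {f : E → F} {P : E →ᵃ[ℝ] F} {S : Set E} (hS : (interior S).Nonempty)
    (hfS : ∀ x ∈ S, f x = P x) (hf : InjOn f S) : Function.Injective P.linear := by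
  refine (injective_iff_map_eq_zero _).2 fun v hv => ?_
  obtain ⟨x, hx⟩ := hS
  obtain ⟨t, ht, hxt⟩ := (eventually_nhdsGT_add_smul_mem (mem_interior_iff_mem_nhds.1 hx) v).exists
  have hxS := interior_subset hx
  have hfx : f (x + t • v) = f x := by
    rw [hfS _ hxt, hfS _ hxS, P.apply_add, map_smul, hv, smul_zero, add_zero]
  exact (smul_eq_zero.1 (add_eq_left.1 (hf hxt hxS hfx))).resolve_left ht.ne'

theorem Convex.disjoint_of_disjoint_interior {S T : Set E} (hT : Convex ℝ T)
    (hTi : (interior T).Nonempty) (hST : Disjoint (interior S) (interior T)) :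
    Disjoint (interior S) T := by
  refine ((hST.closure_right isOpen_interior).mono_right ?_)
  rw [hT.closure_interior_eq_closure_of_nonempty_interior hTi]
  exact subset_closure

theorem exists_separating_functional {S T : Set E} (hS : Convex ℝ S) (hT : Convex ℝ T)
    (hSi : (interior S).Nonempty) (hTi : (interior T).Nonempty)
    (hST : Disjoint (interior S) (interior T)) :
    ∃ (φ : StrongDual ℝ E) (c : ℝ), φ ≠ 0 ∧ (∀ x ∈ S, φ x ≤ c) ∧ ∀ x ∈ T, c ≤ φ x :=
  geometric_hahn_banach_of_nonempty_interior hS hT (hT.disjoint_of_disjoint_interior hTi hST) hSi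
    (hTi.mono interior_subset)

theorem ContinuousLinearMap.mapsTo_interior_of_ne_zero {φ : StrongDual ℝ E} (hφ : φ ≠ 0)
    {S : Set E} {I : Set ℝ} (h : MapsTo φ S I) : MapsTo φ (interior S) (interior I) :=
  fun _ hx => interior_maximal (h.mono_left interior_subset).image_subset
    (φ.isOpenMap_of_ne_zero hφ _ isOpen_interior) (mem_image_of_mem φ hx)

theorem inter_setOf_le_subset_of_subset_union {φ : StrongDual ℝ E} (hφ : φ ≠ 0) {c : ℝ}
    {U S T : Set E} (hU : IsOpen U) (hUST : U ⊆ S ∪ T) (hS : IsClosed S)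
    (hT : ∀ x ∈ T, c ≤ φ x) : U ∩ {x | φ x ≤ c} ⊆ S := by
  have hclosure : {x | φ x ≤ c} = closure {x | φ x < c} := by
    have := (φ.isOpenMap_of_ne_zero hφ).preimage_closure_eq_closure_preimage φ.continuous (Iio c)
    rwa [closure_Iio] at this
  calc U ∩ {x | φ x ≤ c} = U ∩ closure {x | φ x < c} := by rw [hclosure]
    _ ⊆ closure (U ∩ {x | φ x < c}) := hU.inter_closure
    _ ⊆ closure S := closure_mono fun x hx =>
        (hUST hx.1).resolve_right fun hxT => (hT x hxT).not_gt hx.2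
    _ = S := hS.closure_eq

end Convex

section Facet

variable {E : Type*} [NormedAddCommGroup E] [NormedSpace ℝ E] [FiniteDimensional ℝ E]

theorem det_linear_mul_pos_of_union_mem_nhds {f : E → E} {P Q : E →ᵃ[ℝ] E} {S T : Set E}
    (hSc : IsClosed S) (hTc : IsClosed T) (hS : Convex ℝ S) (hT : Convex ℝ T)
    (hSi : (interior S).Nonempty) (hTi : (interior T).Nonempty)
    (hST : Disjoint (interior S) (interior T))
    (hfS : ∀ x ∈ S, f x = P x) (hfT : ∀ x ∈ T, f x = Q x) (hf : InjOn f (S ∪ T))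
    {x : E} (hxS : x ∈ S) (hxT : x ∈ T) (hx : S ∪ T ∈ 𝓝 x) :
    0 < LinearMap.det P.linear * LinearMap.det Q.linear := by
  obtain ⟨φ, c, hφ, hSφ, hTφ⟩ := exists_separating_functional hS hT hSi hTi hST
  obtain ⟨v, hv⟩ : ∃ v, φ v = 1 := by
    obtain ⟨w, hw⟩ := DFunLike.ne_iff.1 hφ
    exact ⟨(φ w)⁻¹ • w, by simpa using inv_mul_cancel₀ hw⟩
  have hU : interior (S ∪ T) ∈ 𝓝 x := interior_mem_nhds.2 hx
  have hUS : ∀ y ∈ interior (S ∪ T), φ y ≤ c → y ∈ S := fun y hy hyc =>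
    inter_setOf_le_subset_of_subset_union hφ isOpen_interior interior_subset hSc hTφ ⟨hy, hyc⟩
  have hUT : ∀ y ∈ interior (S ∪ T), c ≤ φ y → y ∈ T := fun y hy hyc =>
    inter_setOf_le_subset_of_subset_union (neg_ne_zero.2 hφ) (c := -c) isOpen_interior
      (interior_subset.trans (union_comm S T).subset) hTc (by simpa using hSφ)
      ⟨hy, by simpa using hyc⟩
  have hxc : φ x = c := le_antisymm (hSφ x hxS) (hTφ x hxT)
  have hPQx : P x = Q x := (hfS x hxS).symm.trans (hfT x hxT)
  have hker : ∀ h, φ h = 0 → P.linear h = Q.linear h := by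
    intro h hh
    obtain ⟨t, ht, hxt⟩ := (eventually_nhdsGT_add_smul_mem hU h).exists
    have hφt : φ (x + t • h) = c := by simp [hh, hxc]
    have hPQ := (hfS _ (hUS _ hxt hφt.le)).symm.trans (hfT _ (hUT _ hxt hφt.ge))
    rw [P.apply_add, Q.apply_add, hPQx, map_smul, map_smul] at hPQ
    exact smul_right_injective E ht.ne' (add_left_cancel hPQ)
  have hP := P.linear_injective_of_injOn hSi hfS (hf.mono subset_union_left)
  obtain ⟨u, hu⟩ := LinearMap.injective_iff_surjective.1 hP (Q.linear v)
  have hdet := LinearMap.det_eq_det_mul_of_eqOn_ker (φ := φ.toLinearMap) hker hv hu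
  have hu_pos : 0 < φ u := by
    by_contra! hu0
    obtain ⟨t, ⟨ht, hu'⟩, -, hv'⟩ :=
      ((eventually_nhdsGT_add_smul_mem hU u).and (eventually_nhdsGT_add_smul_mem hU v)).exists
    have huS : x + t • u ∈ S := hUS _ hu' (by simp [hxc]; nlinarith)
    have hvT : x + t • v ∈ T := hUT _ hv' (by simp [hxc, hv]; linarith)
    have huv := hf (Or.inl huS) (Or.inr hvT) (by
      rw [hfS _ huS, hfT _ hvT, P.apply_add, Q.apply_add, map_smul, map_smul, hu, hPQx])
    have : u = v := smul_right_injective E ht.ne' (add_left_cancel huv)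
    linarith [congrArg φ this]
  rw [hdet, ← mul_assoc]
  exact mul_pos (mul_self_pos.2 (LinearMap.det_ne_zero_of_injective hP)) hu_pos

end Facet

section Shadow

variable {E : Type*} [NormedAddCommGroup E] [NormedSpace ℝ E]

def segmentShadow (p : E) (A : Set E) : Set E :=
  {q | ∃ t ∈ Ioc (0 : ℝ) 1, AffineMap.lineMap p q t ∈ A}

theorem segmentShadow_mono (p : E) {A B : Set E} (h : A ⊆ B) :
    segmentShadow p A ⊆ segmentShadow p B :=
  fun _ ⟨t, ht, hA⟩ => ⟨t, ht, h hA⟩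

theorem ContinuousLinearMap.apply_lineMap_eq (φ : StrongDual ℝ E) (p q : E) (t : ℝ) :
    φ (AffineMap.lineMap p q t) = t * (φ q - φ p) + φ p := by
  simp [AffineMap.lineMap_apply_module']

variable [FiniteDimensional ℝ E] [MeasurableSpace E] [BorelSpace E] (μ : Measure E)
  [μ.IsAddHaarMeasure]

theorem measure_setOf_apply_eq_eq_zero {φ : StrongDual ℝ E} (hφ : φ ≠ 0) (c : ℝ) :
    μ {x | φ x = c} = 0 := by
  obtain ⟨w, hw⟩ := ContinuousLinearMap.exists_ne_zero hφ
  have hx₀ : φ ((c / φ w) • w) = c := by rw [map_smul, smul_eq_mul, div_mul_cancel₀ _ hw]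
  have hker : (fun y => (c / φ w) • w + y) ⁻¹' {x | φ x = c} = LinearMap.ker φ.toLinearMap := by
    ext y
    simp [hx₀]
  rw [← measure_preimage_add μ ((c / φ w) • w), hker]
  exact Measure.addHaar_submodule μ _ fun h =>
    hφ (ContinuousLinearMap.coe_injective (by simpa using LinearMap.ker_eq_top.1 h))

theorem measure_segmentShadow_inter_eq_zero {φ ψ : StrongDual ℝ E}
    (hφψ : LinearIndependent ℝ ![φ, ψ]) (p : E) (c d : ℝ) :
    μ (segmentShadow p ({x | φ x = c} ∩ {x | ψ x = d})) = 0 := by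
  have hφ : φ ≠ 0 := by simpa using hφψ.ne_zero 0
  by_cases h : c - φ p = 0 ∧ d - ψ p = 0
  · refine measure_mono_null ?_ (measure_setOf_apply_eq_eq_zero μ hφ (φ p))
    rintro q ⟨t, ht, hφt, -⟩
    simp only [mem_ofPred_eq, φ.apply_lineMap_eq] at hφt ⊢
    have : t * (φ q - φ p) = 0 := by linarith [h.1]
    linarith [(mul_eq_zero.1 this).resolve_left ht.1.ne']
  · set χ := (d - ψ p) • φ - (c - φ p) • ψ
    have hχ : χ ≠ 0 := fun hχ => h (by
      have := LinearIndependent.pair_iff.1 hφψ (d - ψ p) (-(c - φ p)) (by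
        rw [neg_smul, ← sub_eq_add_neg]; exact hχ)
      exact ⟨neg_eq_zero.1 this.2, this.1⟩)
    refine measure_mono_null ?_ (measure_setOf_apply_eq_eq_zero μ hχ (χ p))
    rintro q ⟨t, ht, hφt, hψt⟩
    simp only [mem_ofPred_eq, φ.apply_lineMap_eq, ψ.apply_lineMap_eq] at hφt hψt
    have : t * (χ q - χ p) = 0 := by
      simp only [χ, sub_apply, smul_apply, smul_eq_mul]
      linear_combination (d - ψ p) * hφt - (c - φ p) * hψt
    simpa [sub_eq_zero] using (mul_eq_zero.1 this).resolve_left ht.1.ne'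

end Shadow

section Triple

variable {E : Type*} [NormedAddCommGroup E] [NormedSpace ℝ E] [FiniteDimensional ℝ E]
  {ι : Type*} {S : ι → Set E}

theorem measure_segmentShadow_inter_inter_eq_zero [MeasurableSpace E] [BorelSpace E]
    (μ : Measure E) [μ.IsAddHaarMeasure] (hS : ∀ i, Convex ℝ (S i))
    (hSi : ∀ i, (interior (S i)).Nonempty)
    (hST : Pairwise fun i j => Disjoint (interior (S i)) (interior (S j)))
    {i j k : ι} (hij : i ≠ j) (hik : i ≠ k) (hjk : j ≠ k) (p : E) :
    μ (segmentShadow p (S i ∩ S j ∩ S k)) = 0 := by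
  obtain ⟨φ₁, c₁, hφ₁, hi₁, hj₁⟩ :=
    exists_separating_functional (hS i) (hS j) (hSi i) (hSi j) (hST hij)
  obtain ⟨φ₂, c₂, hφ₂, hi₂, hk₂⟩ :=
    exists_separating_functional (hS i) (hS k) (hSi i) (hSi k) (hST hik)
  obtain ⟨φ₃, c₃, hφ₃, hj₃, hk₃⟩ :=
    exists_separating_functional (hS j) (hS k) (hSi j) (hSi k) (hST hjk)
  have h₁ : S i ∩ S j ∩ S k ⊆ {x | φ₁ x = c₁} := fun x hx =>
    le_antisymm (hi₁ x hx.1.1) (hj₁ x hx.1.2)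
  have h₂ : S i ∩ S j ∩ S k ⊆ {x | φ₂ x = c₂} := fun x hx =>
    le_antisymm (hi₂ x hx.1.1) (hk₂ x hx.2)
  have h₃ : S i ∩ S j ∩ S k ⊆ {x | φ₃ x = c₃} := fun x hx =>
    le_antisymm (hj₃ x hx.1.2) (hk₃ x hx.2)
  by_cases h₁₂ : LinearIndependent ℝ ![φ₁, φ₂]
  · exact measure_mono_null (segmentShadow_mono p (subset_inter h₁ h₂))
      (measure_segmentShadow_inter_eq_zero μ h₁₂ p c₁ c₂)
  by_cases h₁₃ : LinearIndependent ℝ ![φ₁, φ₃]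
  · exact measure_mono_null (segmentShadow_mono p (subset_inter h₁ h₃))
      (measure_segmentShadow_inter_eq_zero μ h₁₃ p c₁ c₃)
  obtain ⟨a, rfl⟩ : ∃ a : ℝ, a • φ₁ = φ₂ := by simpa [LinearIndependent.pair_iff' hφ₁] using h₁₂
  obtain ⟨b, rfl⟩ : ∃ b : ℝ, b • φ₁ = φ₃ := by simpa [LinearIndependent.pair_iff' hφ₁] using h₁₃
  suffices S i ∩ S j ∩ S k = ∅ by simp [this, segmentShadow]
  refine eq_empty_of_forall_notMem fun z hz => ?_
  have hlt {T : Set E} {φ : StrongDual ℝ E} {c : ℝ} (hφ : φ ≠ 0) (h : ∀ x ∈ T, φ x ≤ c)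
      {x : E} (hx : x ∈ interior T) : φ x < c := by
    simpa using φ.mapsTo_interior_of_ne_zero hφ (I := Iic c) h hx
  have hgt {T : Set E} {φ : StrongDual ℝ E} {c : ℝ} (hφ : φ ≠ 0) (h : ∀ x ∈ T, c ≤ φ x)
      {x : E} (hx : x ∈ interior T) : c < φ x := by
    simpa using φ.mapsTo_interior_of_ne_zero hφ (I := Ici c) h hx
  obtain ⟨x, hx⟩ := hSi i
  obtain ⟨y, hy⟩ := hSi j
  obtain ⟨w, hw⟩ := hSi k
  have e₁ : φ₁ z = c₁ := h₁ hz
  have e₂ : a * φ₁ z = c₂ := h₂ hz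
  have e₃ : b * φ₁ z = c₃ := h₃ hz
  have hx₁ : φ₁ x < c₁ := hlt hφ₁ hi₁ hx
  have hx₂ : a * φ₁ x < c₂ := hlt hφ₂ hi₂ hx
  have hy₁ : c₁ < φ₁ y := hgt hφ₁ hj₁ hy
  have hy₃ : b * φ₁ y < c₃ := hlt hφ₃ hj₃ hy
  have hw₂ : c₂ < a * φ₁ w := hgt hφ₂ hk₂ hw
  have hw₃ : c₃ < b * φ₁ w := hgt hφ₃ hk₃ hw
  subst e₁ e₂ e₃
  -- the interior points of `S i` and `S j` force `0 < a` and `b < 0`, which `w` contradicts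
  have ha : 0 < a := by nlinarith
  have hb : b < 0 := by nlinarith
  nlinarith

end Triple

theorem exists_segment_avoiding_inter_inter {E : Type*} [NormedAddCommGroup E] [NormedSpace ℝ E]
    [FiniteDimensional ℝ E] {ι : Type*} [Finite ι] {S : ι → Set E} (hS : ∀ i, Convex ℝ (S i))
    (hSi : ∀ i, (interior (S i)).Nonempty)
    (hST : Pairwise fun i j => Disjoint (interior (S i)) (interior (S j)))
    {p : E} {i : ι} (hp : p ∈ interior (S i)) (j : ι) :
    ∃ q ∈ S j, ∀ x ∈ segment ℝ p q, ∀ k l m, k ≠ l → k ≠ m → l ≠ m → x ∉ S k ∩ S l ∩ S m := by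
  borelize E
  set B := ⋃ (k) (l) (m) (_ : k ≠ l ∧ k ≠ m ∧ l ≠ m), segmentShadow p (S k ∩ S l ∩ S m)
  have hB : (Measure.addHaar : Measure E) B = 0 :=
    measure_iUnion_null fun k => measure_iUnion_null fun l => measure_iUnion_null fun m =>
      measure_iUnion_null fun h =>
        measure_segmentShadow_inter_inter_eq_zero _ hS hSi hST h.1 h.2.1 h.2.2 p
  obtain ⟨q, hq, hqB⟩ : (interior (S j) \ B).Nonempty := sdiff_nonempty.2 fun h =>
    (isOpen_interior.measure_pos Measure.addHaar (hSi j)).ne' (measure_mono_null h hB)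
  have hp_only {k : ι} (hk : p ∈ S k) : i = k := by
    by_contra hik
    exact ((hS k).disjoint_of_disjoint_interior (hSi k) (hST hik)).ne_of_mem hp hk rfl
  refine ⟨q, interior_subset hq, fun x hx k l m hkl hkm hlm hklm => ?_⟩
  rw [segment_eq_image_lineMap] at hx
  obtain ⟨t, ht, rfl⟩ := hx
  rcases ht.1.eq_or_lt with rfl | ht₀
  · rw [AffineMap.lineMap_apply_zero] at hklm
    exact hkl ((hp_only hklm.1.1).symm.trans (hp_only hklm.1.2))
  · exact hqB (mem_iUnion₂.2 ⟨k, l, mem_iUnion₂.2 ⟨m, ⟨hkl, hkm, hlm⟩, t, ⟨ht₀, ht.2⟩, hklm⟩⟩)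

namespace IsPiecewiseAffine

variable {n N : ℕ} {f : Eu n → Eu n} {F : Fin N → (Eu n →ᵃ[ℝ] Eu n)} {C : Fin N → Set (Eu n)}

theorem det_ne_zero (hpa : IsPiecewiseAffine f F C) (hf : Function.Injective f) (k : Fin N) :
    LinearMap.det (F k).linear ≠ 0 := by
  obtain ⟨-, hint, -, -, hfC⟩ := hpa
  exact LinearMap.det_ne_zero_of_injective ((F k).linear_injective_of_injOn (hint k) (hfC k) hf.injOn)

theorem det_mul_det_pos_of_mem (hpa : IsPiecewiseAffine f F C) (hf : Function.Injective f)
    {x : Eu n} {k l : Fin N} (hk : x ∈ C k) (hl : x ∈ C l) (hx : ∀ m, x ∈ C m → m = k ∨ m = l) :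
    0 < LinearMap.det (F k).linear * LinearMap.det (F l).linear := by
  rcases eq_or_ne k l with rfl | hkl
  · exact mul_self_pos.2 (hpa.det_ne_zero hf k)
  obtain ⟨hpoly, hint, hcov, hdisj, hfC⟩ := hpa
  refine det_linear_mul_pos_of_union_mem_nhds (hpoly k).isClosed (hpoly l).isClosed
    (hpoly k).convex (hpoly l).convex (hint k) (hint l)
    (disjoint_iff_inter_eq_empty.2 (hdisj k l hkl)) (hfC k) (hfC l) hf.injOn hk hl ?_
  filter_upwards [eventually_forall_mem_imp_mem (fun m => (hpoly m).isClosed) x] with y hy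
  obtain ⟨m, hm⟩ := mem_iUnion.1 (hcov ▸ mem_univ y)
  rcases hx m (hy m hm) with rfl | rfl
  exacts [Or.inl hm, Or.inr hm]

theorem det_mul_det_pos (hpa : IsPiecewiseAffine f F C) (hf : Function.Injective f)
    (i j : Fin N) : 0 < LinearMap.det (F i).linear * LinearMap.det (F j).linear := by
  have ⟨hpoly, hint, hcov, hdisj, _⟩ := hpa
  set d := fun k => LinearMap.det (F k).linear
  have hd := hpa.det_ne_zero hf
  obtain ⟨p, hp⟩ := hint i
  obtain ⟨q, hq, hgen⟩ := exists_segment_avoiding_inter_inter (fun k => (hpoly k).convex) hint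
    (fun k l hkl => disjoint_iff_inter_eq_empty.2 (hdisj k l hkl)) hp j
  have hclosed (s : ℝ → Prop) : IsClosed (⋃ (k) (_ : s (d i * d k)), C k) :=
    isClosed_iUnion_of_finite fun k => isClosed_iUnion_of_finite fun _ => (hpoly k).isClosed
  have hcover : segment ℝ p q ⊆
      (⋃ (k) (_ : 0 < d i * d k), C k) ∪ ⋃ (k) (_ : d i * d k < 0), C k := by
    intro y _
    obtain ⟨m, hm⟩ := mem_iUnion.1 (hcov ▸ mem_univ y)
    rcases (mul_ne_zero (hd i) (hd m)).lt_or_gt with h | h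
    exacts [Or.inr (mem_biUnion h hm), Or.inl (mem_biUnion h hm)]
  by_contra hij
  obtain ⟨x, hx, hxk, hxl⟩ := isPreconnected_closed_iff.1 (convex_segment p q).isPreconnected
    _ _ (hclosed (0 < ·)) (hclosed (· < 0)) hcover
    ⟨p, left_mem_segment ℝ p q, mem_biUnion (mul_self_pos.2 (hd i)) (interior_subset hp)⟩
    ⟨q, right_mem_segment ℝ p q,
      mem_biUnion ((not_lt.1 hij).lt_of_ne (mul_ne_zero (hd i) (hd j))) hq⟩
  simp only [mem_iUnion] at hxk hxl
  obtain ⟨k, hk_pos, hk⟩ := hxk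
  obtain ⟨l, hl_neg, hl⟩ := hxl
  have hkl : k ≠ l := by rintro rfl; linarith
  have := hpa.det_mul_det_pos_of_mem hf hk hl fun m hm => by
    by_contra! hm'
    exact hgen x hx k l m hkl (Ne.symm hm'.1) (Ne.symm hm'.2) ⟨⟨hk, hl⟩, hm⟩
  nlinarith [mul_pos (mul_self_pos.2 (hd i)) this, mul_neg_of_pos_of_neg hk_pos hl_neg]

end IsPiecewiseAffine

/-- If a piecewise affine map `f : ℝⁿ → ℝⁿ` is a bijection, then
the Jacobians (determinants of the linear parts) of all its pieces have the same
sign: all positive or all negative. -/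
theorem piecewise_affine_bijective_jacobians_same_sign
    {n N : ℕ} (f : Eu n → Eu n) (F : Fin N → (Eu n →ᵃ[ℝ] Eu n))
    (C : Fin N → Set (Eu n)) (hpa : IsPiecewiseAffine f F C)
    (hbij : Function.Bijective f) :
    (∀ i, 0 < LinearMap.det (F i).linear) ∨ (∀ i, LinearMap.det (F i).linear < 0) := by
  by_cases hpos : ∀ i, 0 < LinearMap.det (F i).linear
  · exact Or.inl hpos
  obtain ⟨i, hi⟩ := not_forall.1 hpos
  refine Or.inr fun j => ?_
  rcases pos_and_pos_or_neg_and_neg_of_mul_pos (hpa.det_mul_det_pos hbij.injective i j) with h | h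
  exacts [absurd h.1 hi, h.2]
end

section
/- Define f : ℝ³ → ℝ³ by f(x, y, z) = (min(2y, 0) + min(2x + 2y, 0) + z + x, min(2x, 0) + min(2x, 2y) + z + y, min(2x, 0) + min(2x + 2y, 0) + z + y). Then f(−x, −y, z + 4x + 4y) = f(x, y, z) for all (x, y, z) ∈ ℝ³; in particular f is not injective. Moreover, at every point p ∈ ℝ³ at which f is (Fréchet) differentiable, det(Df(p)) = 2. -/
/-- The point of `ℝ²` with coordinates `(x, y)`. -/
noncomputable def v2 (x y : ℝ) : Eu 2 := (WithLp.equiv 2 (Fin 2 → ℝ)).symm ![x, y]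

/-- The point of `ℝ³` with coordinates `(x, y, z)`. -/
noncomputable def v3 (x y z : ℝ) : Eu 3 := (WithLp.equiv 2 (Fin 3 → ℝ)).symm ![x, y, z]

open Filter Topology

lemma min_two_mul_two_mul (a b : ℝ) : min (2 * a) (2 * b) = a + b - |a - b| := by
  rcases le_total a b with h | h
  · rw [min_eq_left (by linarith), abs_of_nonpos (by linarith)]; ring
  · rw [min_eq_right (by linarith), abs_of_nonneg (by linarith)]; ring

lemma min_two_mul_zero (a : ℝ) : min (2 * a) 0 = a - |a| := by
  simpa using min_two_mul_two_mul a 0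

lemma not_differentiableAt_of_restrict_line_eq_abs {E : Type*} [NormedAddCommGroup E]
    [NormedSpace ℝ E] {φ : E → ℝ} {p v : E} {c k : ℝ} (hc : c ≠ 0)
    (hφ : ∀ t : ℝ, φ (p + t • v) = c * |t| + k) : ¬ DifferentiableAt ℝ φ p := by
  intro hp
  have hline : DifferentiableAt ℝ (fun t : ℝ => φ (p + t • v)) 0 := by
    refine DifferentiableAt.comp (g := φ) 0 ?_ (by fun_prop)
    simpa using hp
  apply not_differentiableAt_abs_zero
  have habs : (abs : ℝ → ℝ) = fun t => (φ (p + t • v) - k) / c := by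
    funext t; rw [hφ]; field_simp; ring
  rw [habs]
  exact (hline.sub_const k).div_const c

lemma eventually_abs_eq_sign_mul {E : Type*} [TopologicalSpace E] {u : E → ℝ} {p : E}
    (hu : ContinuousAt u p) (hp : u p ≠ 0) : ∀ᶠ q in 𝓝 p, |u q| = Real.sign (u p) * u q := by
  rcases hp.lt_or_gt with hneg | hpos
  · filter_upwards [hu.eventually (eventually_lt_nhds hneg)] with q hq
    rw [Real.sign_of_neg hneg, abs_of_neg hq]; ring
  · filter_upwards [hu.eventually (eventually_gt_nhds hpos)] with q hq
    rw [Real.sign_of_pos hpos, abs_of_pos hq]; ring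

lemma det_fderiv_of_eventuallyEq_toEuclideanLin {ι : Type*} [Fintype ι] [DecidableEq ι]
    {f : EuclideanSpace ℝ ι → EuclideanSpace ℝ ι} {p : EuclideanSpace ℝ ι}
    {M : Matrix ι ι ℝ} (h : f =ᶠ[𝓝 p] Matrix.toEuclideanLin M) :
    LinearMap.det (fderiv ℝ f p).toLinearMap = M.det := by
  let L := LinearMap.toContinuousLinearMap (Matrix.toEuclideanLin M)
  rw [(L.hasFDerivAt.congr_of_eventuallyEq h).fderiv, LinearMap.coe_toContinuousLinearMap,
    Matrix.toEuclideanLin_eq_toLin_orthonormal, LinearMap.det_toLin]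

lemma differentiableAt_apply_sub_apply {ι : Type*} [Finite ι] {E : Type*} [NormedAddCommGroup E]
    [NormedSpace ℝ E] {f : E → EuclideanSpace ℝ ι} {p : E} (hp : DifferentiableAt ℝ f p)
    (i j : ι) : DifferentiableAt ℝ (fun q => f q i - f q j) p :=
  ((differentiableAt_piLp 2).1 hp i).sub ((differentiableAt_piLp 2).1 hp j)

@[simp] lemma v3_apply_zero (x y z : ℝ) : v3 x y z 0 = x := rfl
@[simp] lemma v3_apply_one (x y z : ℝ) : v3 x y z 1 = y := rfl
@[simp] lemma v3_apply_two (x y z : ℝ) : v3 x y z 2 = z := rfl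

lemma v3_eta (q : Eu 3) : v3 (q 0) (q 1) (q 2) = q := by
  ext i; fin_cases i <;> rfl

lemma add_smul_v3 (p : Eu 3) (t a b c : ℝ) :
    p + t • v3 a b c = v3 (p 0 + t * a) (p 1 + t * b) (p 2 + t * c) := by
  ext i; fin_cases i <;> rfl

/-- The Jacobian of the tropical map in the region where `x, y, x + y, x - y` have signs
`sx, sy, sp, sm`. -/
def tropicalJacobian (sx sy sp sm : ℝ) : Matrix (Fin 3) (Fin 3) ℝ :=
  !![2 - sp, 2 - sy - sp, 1; 2 - sx - sm, 2 + sm, 1; 2 - sx - sp, 2 - sp, 1]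

lemma det_tropicalJacobian (sx sy sp sm : ℝ) :
    (tropicalJacobian sx sy sp sm).det = sx * (sp + sm) + sy * (sp - sm) := by
  simp only [tropicalJacobian, Matrix.det_fin_three, Matrix.of_apply, Matrix.cons_val',
    Matrix.cons_val_zero, Matrix.cons_val_one, Matrix.cons_val, Matrix.cons_val_fin_one]
  ring

lemma det_tropicalJacobian_sign {x y : ℝ} (hx : x ≠ 0) (hy : y ≠ 0) (hp : x + y ≠ 0)
    (hm : x - y ≠ 0) :
    (tropicalJacobian x.sign y.sign (x + y).sign (x - y).sign).det = 2 := by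
  rw [det_tropicalJacobian]
  rcases hx.lt_or_gt with hx | hx <;> rcases hy.lt_or_gt with hy | hy <;>
    rcases hp.lt_or_gt with hp | hp <;> rcases hm.lt_or_gt with hm | hm <;>
    first
      | linarith
      | simp only [Real.sign_of_neg, Real.sign_of_pos, hx, hy, hp, hm]; norm_num

namespace TropicalMap

variable {f : Eu 3 → Eu 3}
  (hf : ∀ x y z : ℝ, f (v3 x y z) =
    v3 (min (2 * y) 0 + min (2 * x + 2 * y) 0 + z + x)
       (min (2 * x) 0 + min (2 * x) (2 * y) + z + y)
       (min (2 * x) 0 + min (2 * x + 2 * y) 0 + z + y))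
include hf

lemma apply_eq_abs_form (x y z : ℝ) :
    f (v3 x y z) = v3 (2 * x + 2 * y + z - |y| - |x + y|) (2 * x + 2 * y + z - |x| - |x - y|)
      (2 * x + 2 * y + z - |x| - |x + y|) := by
  rw [hf, show 2 * x + 2 * y = 2 * (x + y) by ring, min_two_mul_zero, min_two_mul_zero,
    min_two_mul_zero, min_two_mul_two_mul]
  congr 1 <;> ring

lemma apply_neg_neg_add (x y z : ℝ) :
    f (v3 (-x) (-y) (z + 4 * x + 4 * y)) = f (v3 x y z) := by
  rw [apply_eq_abs_form hf, apply_eq_abs_form hf, show -x + -y = -(x + y) by ring,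
    show -x - -y = -(x - y) by ring, abs_neg, abs_neg, abs_neg, abs_neg]
  congr 1 <;> ring

lemma not_injective : ¬ Function.Injective f := fun hinj => by
  have h := congrArg (fun q : Eu 3 => q 0) (hinj (apply_neg_neg_add hf 1 0 0))
  norm_num at h

lemma apply_zero_sub_apply_two (q : Eu 3) : f q 0 - f q 2 = |q 0| - |q 1| := by
  have hq := apply_eq_abs_form hf (q 0) (q 1) (q 2)
  rw [v3_eta] at hq
  rw [hq, v3_apply_zero, v3_apply_two]
  ring

lemma apply_one_sub_apply_two (q : Eu 3) : f q 1 - f q 2 = |q 0 + q 1| - |q 0 - q 1| := by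
  have hq := apply_eq_abs_form hf (q 0) (q 1) (q 2)
  rw [v3_eta] at hq
  rw [hq, v3_apply_one, v3_apply_two]
  ring

lemma ne_zero_of_differentiableAt {p : Eu 3} (hp : DifferentiableAt ℝ f p) :
    p 0 ≠ 0 ∧ p 1 ≠ 0 ∧ p 0 + p 1 ≠ 0 ∧ p 0 - p 1 ≠ 0 := by
  have h02 := differentiableAt_apply_sub_apply hp 0 2
  have h12 := differentiableAt_apply_sub_apply hp 1 2
  refine ⟨fun h => ?_, fun h => ?_, fun h => ?_, fun h => ?_⟩
  · refine not_differentiableAt_of_restrict_line_eq_abs (v := v3 1 0 0) (c := 1)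
      (k := -|p 1|) one_ne_zero (fun t => ?_) h02
    rw [add_smul_v3, apply_zero_sub_apply_two hf, v3_apply_zero, v3_apply_one, h]
    ring_nf
  · refine not_differentiableAt_of_restrict_line_eq_abs (v := v3 0 1 0) (c := -1)
      (k := |p 0|) (by norm_num) (fun t => ?_) h02
    rw [add_smul_v3, apply_zero_sub_apply_two hf, v3_apply_zero, v3_apply_one, h]
    ring_nf
  · refine not_differentiableAt_of_restrict_line_eq_abs (v := v3 1 1 0) (c := 2)
      (k := -|p 0 - p 1|) two_ne_zero (fun t => ?_) h12
    rw [add_smul_v3, apply_one_sub_apply_two hf, v3_apply_zero, v3_apply_one,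
      show p 0 + t * 1 + (p 1 + t * 1) = 2 * t by linear_combination h, abs_mul, abs_two]
    ring_nf
  · refine not_differentiableAt_of_restrict_line_eq_abs (v := v3 1 (-1) 0) (c := -2)
      (k := |p 0 + p 1|) (by norm_num) (fun t => ?_) h12
    rw [add_smul_v3, apply_one_sub_apply_two hf, v3_apply_zero, v3_apply_one,
      show p 0 + t * 1 - (p 1 + t * -1) = 2 * t by linear_combination h, abs_mul, abs_two]
    ring_nf

lemma eventuallyEq_tropicalJacobian {p : Eu 3} (hx : p 0 ≠ 0) (hy : p 1 ≠ 0)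
    (hp : p 0 + p 1 ≠ 0) (hm : p 0 - p 1 ≠ 0) :
    f =ᶠ[𝓝 p] Matrix.toEuclideanLin
      (tropicalJacobian (p 0).sign (p 1).sign (p 0 + p 1).sign (p 0 - p 1).sign) := by
  filter_upwards [eventually_abs_eq_sign_mul (u := fun q : Eu 3 => q 0) (by fun_prop) hx,
    eventually_abs_eq_sign_mul (u := fun q : Eu 3 => q 1) (by fun_prop) hy,
    eventually_abs_eq_sign_mul (u := fun q : Eu 3 => q 0 + q 1) (by fun_prop) hp,
    eventually_abs_eq_sign_mul (u := fun q : Eu 3 => q 0 - q 1) (by fun_prop) hm]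
    with q ex ey ep em
  have hq := apply_eq_abs_form hf (q 0) (q 1) (q 2)
  rw [v3_eta] at hq
  rw [hq, ex, ey, ep, em]
  ext i
  fin_cases i <;>
    simp only [Fin.zero_eta, Fin.mk_one, Fin.reduceFinMk, v3_apply_zero, v3_apply_one,
      v3_apply_two, tropicalJacobian, Matrix.ofLp_toLpLin, Matrix.toLin'_apply, Matrix.mulVec,
      dotProduct, Fin.sum_univ_three, Matrix.of_apply, Matrix.cons_val', Matrix.cons_val_fin_one,
      Matrix.cons_val_zero, Matrix.cons_val_one, Matrix.cons_val] <;>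
    ring

end TropicalMap

/-- The tropical polynomial map
`f(x, y, z) = (min(2y, 0) + min(2x + 2y, 0) + z + x,
min(2x, 0) + min(2x, 2y) + z + y, min(2x, 0) + min(2x + 2y, 0) + z + y)`
satisfies `f(−x, −y, z + 4x + 4y) = f(x, y, z)` (so it is not injective), yet
`det Df(p) = 2` at every point `p` of differentiability. -/
theorem tropical_polynomial_space_counterexample
    (f : Eu 3 → Eu 3)
    (hf : ∀ x y z : ℝ, f (v3 x y z) =
      v3 (min (2 * y) 0 + min (2 * x + 2 * y) 0 + z + x)
         (min (2 * x) 0 + min (2 * x) (2 * y) + z + y)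
         (min (2 * x) 0 + min (2 * x + 2 * y) 0 + z + y)) :
    (∀ x y z : ℝ, f (v3 (-x) (-y) (z + 4 * x + 4 * y)) = f (v3 x y z)) ∧
    ¬ Function.Injective f ∧
    (∀ p : Eu 3, DifferentiableAt ℝ f p →
      LinearMap.det (fderiv ℝ f p).toLinearMap = 2) := by
  refine ⟨TropicalMap.apply_neg_neg_add hf, TropicalMap.not_injective hf, fun p hp => ?_⟩
  obtain ⟨hx, hy, hplus, hminus⟩ := TropicalMap.ne_zero_of_differentiableAt hf hp
  rw [det_fderiv_of_eventuallyEq_toEuclideanLin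
    (TropicalMap.eventuallyEq_tropicalJacobian hf hx hy hplus hminus),
    det_tropicalJacobian_sign hx hy hplus hminus]
end
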